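/- Let T be a κ-strict pseudo-contraction with fixed point p and (xₙ) the Mann iteration with λₙ ∈ (κ,1). Then ∑_{n=0}^{∞} (λₙ-κ)(1-λₙ)‖xₙ - Txₙ‖² ≤ ‖x₀ - p‖², in particular the series converges. -/

import Mathlib

/-!
At the fixed point the pseudo-contraction inequality reads
`‖T u - p‖² ≤ ‖u - p‖² + κ ‖u - T u‖²`. Combined with the Hilbert-space identity for the norm of
a convex combination, it shows that one Mann step decreases `‖xₙ - p‖²` by at least
`(λₙ - κ)(1 - λₙ) ‖xₙ - T xₙ‖²`. The series therefore telescopes and is bounded by `‖x₀ - p‖²`.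
-/

open Set

theorem Convex.mann_iterate_mem {E : Type*} [AddCommGroup E] [Module ℝ E] {C : Set E}
    (hC : Convex ℝ C) {T : E → E} (hT : MapsTo T C C) {lam : ℕ → ℝ}
    (hlam : ∀ n, lam n ∈ Icc 0 1) {x : ℕ → E} (hx0 : x 0 ∈ C)
    (hxrec : ∀ n, x (n + 1) = lam n • x n + (1 - lam n) • T (x n)) (n : ℕ) : x n ∈ C := by
  induction n with
  | zero => exact hx0
  | succ n ih =>
    rw [hxrec n]
    exact hC ih (hT ih) (hlam n).1 (sub_nonneg.2 (hlam n).2) (add_sub_cancel _ _)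

section InnerProductSpace

variable {H : Type*} [NormedAddCommGroup H] [InnerProductSpace ℝ H]

theorem norm_smul_add_one_sub_smul_sq (a b : H) (t : ℝ) :
    ‖t • a + (1 - t) • b‖ ^ 2
      = t * ‖a‖ ^ 2 + (1 - t) * ‖b‖ ^ 2 - t * (1 - t) * ‖a - b‖ ^ 2 := by
  simp only [← real_inner_self_eq_norm_sq, inner_add_add_self, inner_sub_sub_self,
    real_inner_smul_left, real_inner_smul_right, real_inner_comm a b]
  ring

theorem norm_smul_add_one_sub_smul_sub_sq_le {κ t : ℝ} {u v p : H} (ht : t ≤ 1)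
    (hv : ‖v - p‖ ^ 2 ≤ ‖u - p‖ ^ 2 + κ * ‖u - v‖ ^ 2) :
    ‖t • u + (1 - t) • v - p‖ ^ 2 ≤ ‖u - p‖ ^ 2 - (t - κ) * (1 - t) * ‖u - v‖ ^ 2 := by
  have hsplit : t • u + (1 - t) • v - p = t • (u - p) + (1 - t) • (v - p) := by module
  rw [hsplit, norm_smul_add_one_sub_smul_sq, sub_sub_sub_cancel_right]
  nlinarith [mul_le_mul_of_nonneg_left hv (sub_nonneg.2 ht)]

end InnerProductSpace

theorem summable_and_tsum_le_of_le_sub_succ {a b : ℕ → ℝ} (ha : ∀ n, 0 ≤ a n)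
    (hb : ∀ n, 0 ≤ b n) (hab : ∀ n, a n ≤ b n - b (n + 1)) :
    Summable a ∧ ∑' n, a n ≤ b 0 := by
  have hpartial : ∀ n, ∑ i ∈ Finset.range n, a i ≤ b 0 := fun n =>
    calc ∑ i ∈ Finset.range n, a i
        ≤ ∑ i ∈ Finset.range n, (b i - b (i + 1)) := Finset.sum_le_sum fun i _ => hab i
      _ = b 0 - b n := Finset.sum_range_sub' b n
      _ ≤ b 0 := sub_le_self _ (hb n)
  exact ⟨summable_of_sum_range_le ha hpartial, Real.tsum_le_of_sum_range_le ha hpartial⟩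

theorem stmt_14_general {H : Type*} [NormedAddCommGroup H] [InnerProductSpace ℝ H]
    (C : Set H) (hCconv : Convex ℝ C)
    (κ : ℝ) (hκ0 : 0 ≤ κ)
    (T : H → H) (hTmap : Set.MapsTo T C C)
    (hT : ∀ u ∈ C, ∀ v ∈ C,
      ‖T u - T v‖ ^ 2 ≤ ‖u - v‖ ^ 2 + κ * ‖(u - T u) - (v - T v)‖ ^ 2)
    (p : H) (hp : p ∈ C) (hfix : T p = p)
    (lam : ℕ → ℝ) (hlam : ∀ n, lam n ∈ Set.Ioo κ 1)
    (x : ℕ → H) (hx0 : x 0 ∈ C)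
    (hxrec : ∀ n, x (n + 1) = lam n • x n + (1 - lam n) • T (x n)) :
    Summable (fun n : ℕ => (lam n - κ) * (1 - lam n) * ‖x n - T (x n)‖ ^ 2) ∧
      ∑' n : ℕ, (lam n - κ) * (1 - lam n) * ‖x n - T (x n)‖ ^ 2
        ≤ ‖x 0 - p‖ ^ 2 := by
  have hmem : ∀ n, x n ∈ C := hCconv.mann_iterate_mem hTmap
    (fun n => ⟨hκ0.trans (hlam n).1.le, (hlam n).2.le⟩) hx0 hxrec
  refine summable_and_tsum_le_of_le_sub_succ (b := fun n => ‖x n - p‖ ^ 2) (fun n => ?_)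
    (fun n => sq_nonneg _) (fun n => ?_)
  · exact mul_nonneg (mul_nonneg (sub_nonneg.2 (hlam n).1.le) (sub_nonneg.2 (hlam n).2.le))
      (sq_nonneg _)
  · have hTx : ‖T (x n) - p‖ ^ 2 ≤ ‖x n - p‖ ^ 2 + κ * ‖x n - T (x n)‖ ^ 2 := by
      simpa [hfix] using hT (x n) (hmem n) p hp
    rw [hxrec n]
    linarith [norm_smul_add_one_sub_smul_sub_sq_le (hlam n).2.le hTx]

theorem stmt_14 {H : Type*} [NormedAddCommGroup H] [InnerProductSpace ℝ H]
    (C : Set H) (hCne : C.Nonempty) (hCconv : Convex ℝ C)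
    (κ : ℝ) (hκ0 : 0 ≤ κ) (hκ1 : κ < 1)
    (T : H → H) (hTmap : Set.MapsTo T C C)
    (hT : ∀ u ∈ C, ∀ v ∈ C,
      ‖T u - T v‖ ^ 2 ≤ ‖u - v‖ ^ 2 + κ * ‖(u - T u) - (v - T v)‖ ^ 2)
    (p : H) (hp : p ∈ C) (hfix : T p = p)
    (lam : ℕ → ℝ) (hlam : ∀ n, lam n ∈ Set.Ioo κ 1)
    (x : ℕ → H) (hx0 : x 0 ∈ C)
    (hxrec : ∀ n, x (n + 1) = lam n • x n + (1 - lam n) • T (x n)) :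
    Summable (fun n : ℕ => (lam n - κ) * (1 - lam n) * ‖x n - T (x n)‖ ^ 2) ∧
      ∑' n : ℕ, (lam n - κ) * (1 - lam n) * ‖x n - T (x n)‖ ^ 2
        ≤ ‖x 0 - p‖ ^ 2 :=
  stmt_14_general C hCconv κ hκ0 T hTmap hT p hp hfix lam hlam x hx0 hxrec
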